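/- arXiv:2502.19255 — 9 statements merged into one kernel-verified Lean document; each statement's English description precedes it below -/
import Mathlib

section
/- If x, y ∈ [-C, C] for some C > 0, then |x - y| ≤ 4·exp(C)·|σ(x) - σ(y)|, where σ(t) = 1/(1+e^{-t}) is the sigmoid function. -/
noncomputable def sigmoid (t : ℝ) : ℝ := 1 / (1 + Real.exp (-t))

/-!
Since σ' = σ (1 - σ) = 1 / ((1 + e^{-t}) (1 + e^t)) and (1 + e^{-t}) (1 + e^t) ≤ 4 e^{|t|},
the derivative of σ is at least 1 / (4 e^C) on [-C, C]; the mean value theorem turns this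
into the reverse Lipschitz bound.
-/

theorem Convex.mul_abs_sub_le_abs_image_sub_of_le_deriv {D : Set ℝ} (hD : Convex ℝ D) {f : ℝ → ℝ}
    (hf : ContinuousOn f D) (hf' : DifferentiableOn ℝ f (interior D)) {c : ℝ}
    (hf'_ge : ∀ t ∈ interior D, c ≤ deriv f t) {x y : ℝ} (hx : x ∈ D) (hy : y ∈ D) :
    c * |x - y| ≤ |f x - f y| := by
  wlog hxy : x ≤ y generalizing x y
  · rw [abs_sub_comm, abs_sub_comm (f x)]
    exact this hy hx (le_of_not_ge hxy)
  calc c * |x - y| = c * (y - x) := by rw [abs_sub_comm, abs_of_nonneg (sub_nonneg.2 hxy)]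
    _ ≤ f y - f x := hD.mul_sub_le_image_sub_of_le_deriv hf hf' hf'_ge x hx y hy hxy
    _ ≤ |f x - f y| := by rw [abs_sub_comm]; exact le_abs_self _

namespace Real

lemma one_add_exp_neg_mul_one_add_exp_le (t : ℝ) :
    (1 + exp (-t)) * (1 + exp t) ≤ 4 * exp |t| := by
  have h1 : 1 ≤ exp |t| := one_le_exp (abs_nonneg t)
  have h2 : exp t ≤ exp |t| := exp_le_exp.2 (le_abs_self t)
  have h3 : exp (-t) ≤ exp |t| := exp_le_exp.2 (neg_le_abs t)
  have hprod : exp (-t) * exp t = 1 := by rw [← exp_add, neg_add_cancel, exp_zero]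
  linarith [show (1 + exp (-t)) * (1 + exp t) = 2 + exp (-t) + exp t by linear_combination hprod]

lemma inv_four_mul_exp_abs_le_deriv_sigmoid (t : ℝ) :
    (4 * exp |t|)⁻¹ ≤ deriv Real.sigmoid t := by
  have hσ : Real.sigmoid t * (1 - Real.sigmoid t) = ((1 + exp (-t)) * (1 + exp t))⁻¹ := by
    rw [← sigmoid_neg, sigmoid_def, sigmoid_def, neg_neg, mul_inv]
  rw [(hasDerivAt_sigmoid t).deriv, hσ]
  exact inv_anti₀ (by positivity) (one_add_exp_neg_mul_one_add_exp_le t)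

end Real

lemma sigmoid_eq_real_sigmoid : sigmoid = Real.sigmoid := by
  funext t; rw [sigmoid, Real.sigmoid_def, one_div]

theorem sigmoid_bound_general (C x y : ℝ)
    (hx : x ∈ Set.Icc (-C) C) (hy : y ∈ Set.Icc (-C) C) :
    |x - y| ≤ 4 * Real.exp C * |sigmoid x - sigmoid y| := by
  have hderiv : ∀ t ∈ interior (Set.Icc (-C) C), (4 * Real.exp C)⁻¹ ≤ deriv Real.sigmoid t := by
    intro t ht
    rw [interior_Icc] at ht
    have ht : |t| ≤ C := abs_le.2 ⟨ht.1.le, ht.2.le⟩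
    calc (4 * Real.exp C)⁻¹ ≤ (4 * Real.exp |t|)⁻¹ := by gcongr
      _ ≤ deriv Real.sigmoid t := Real.inv_four_mul_exp_abs_le_deriv_sigmoid t
  rw [sigmoid_eq_real_sigmoid, ← inv_mul_le_iff₀ (by positivity)]
  exact (convex_Icc _ _).mul_abs_sub_le_abs_image_sub_of_le_deriv continuous_sigmoid.continuousOn
    differentiable_sigmoid.differentiableOn hderiv hx hy

theorem sigmoid_bound (C x y : ℝ) (hC : 0 < C)
    (hx : x ∈ Set.Icc (-C) C) (hy : y ∈ Set.Icc (-C) C) :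
    |x - y| ≤ 4 * Real.exp C * |sigmoid x - sigmoid y| :=
  sigmoid_bound_general C x y hx hy
end

section
/- Let P, Q be probability mass functions on a finite set A with P(a), Q(a) > 0 for all a and P ≠ Q. Let ζ = exp(D_∞(P‖Q)) where D_∞(P‖Q) = log(max_a P(a)/Q(a)). Then KL(P‖Q) ≤ κ₁(ζ)·KL(Q‖P), where κ₁(t) = (t·log t + 1 − t)/((t − 1) − log t). -/
/-!
Writing `t = P a / Q a`, the two divergences are `∑ Q a * klFun t` and `∑ Q a * revKLFun t`
with `revKLFun t = t - 1 - log t`, so it suffices that `G = c * revKLFun - klFun` is nonnegative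
on `(0, ζ]` for `c = κ₁(ζ) = klFun ζ / revKLFun ζ`, which makes `G ζ = 0`. Since `G 1 = G' 1 = 0`,
`G'' t = (c - t) / t²` and `c ≥ 1`, the function `G` decreases on `(0, 1]`, increases on `[1, c]`
and is concave on `[c, ∞)`, where it stays above `min (G c) (G ζ) ≥ 0` up to `ζ`.
-/

open Real Set InformationTheory

lemma exists_lt_of_sum_eq_of_ne {ι M : Type*} [Fintype ι] [AddCommMonoid M] [LinearOrder M]
    [IsOrderedCancelAddMonoid M] {f g : ι → M} (hsum : ∑ i, f i = ∑ i, g i) (hne : f ≠ g) :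
    ∃ i, g i < f i := by
  by_contra! h
  exact hne (funext fun i => (Finset.sum_eq_sum_iff_of_le fun i _ => h i).1 hsum i
    (Finset.mem_univ i))

noncomputable def revKLFun (x : ℝ) : ℝ := x - 1 - log x

lemma revKLFun_pos {x : ℝ} (hx : 0 < x) (hx1 : x ≠ 1) : 0 < revKLFun x := by
  have := log_lt_sub_one_of_pos hx hx1
  unfold revKLFun
  linarith

noncomputable def klGap (c x : ℝ) : ℝ := c * revKLFun x - klFun x

lemma klGap_one (c : ℝ) : klGap c 1 = 0 := by
  simp [klGap, revKLFun, klFun_one]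

lemma hasDerivAt_klGap (c : ℝ) {x : ℝ} (hx : 0 < x) :
    HasDerivAt (klGap c) (c * (1 - x⁻¹) - log x) x := by
  have hrev : HasDerivAt revKLFun (1 - x⁻¹) x :=
    ((hasDerivAt_id x).sub_const 1).sub (hasDerivAt_log hx.ne')
  exact (hrev.const_mul c).sub (hasDerivAt_klFun hx.ne')

section Monotonicity

variable {c : ℝ} {D : Set ℝ}

lemma continuousOn_klGap (hD : D ⊆ Ioi 0) : ContinuousOn (klGap c) D :=
  fun _ hx => (hasDerivAt_klGap c (hD hx)).continuousAt.continuousWithinAt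

lemma monotoneOn_klGap (hD : Convex ℝ D) (hD0 : D ⊆ Ioi 0)
    (h : ∀ x ∈ D, 0 ≤ c * (1 - x⁻¹) - log x) : MonotoneOn (klGap c) D :=
  monotoneOn_of_hasDerivWithinAt_nonneg hD (continuousOn_klGap hD0)
    (fun _ hx => (hasDerivAt_klGap c (hD0 (interior_subset hx))).hasDerivWithinAt)
    (fun x hx => h x (interior_subset hx))

lemma antitoneOn_klGap (hD : Convex ℝ D) (hD0 : D ⊆ Ioi 0)
    (h : ∀ x ∈ D, c * (1 - x⁻¹) - log x ≤ 0) : AntitoneOn (klGap c) D :=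
  antitoneOn_of_hasDerivWithinAt_nonpos hD (continuousOn_klGap hD0)
    (fun _ hx => (hasDerivAt_klGap c (hD0 (interior_subset hx))).hasDerivWithinAt)
    (fun x hx => h x (interior_subset hx))

end Monotonicity

section DerivativeSign

variable {c x : ℝ}

lemma deriv_klGap_nonpos (hx : 0 < x) (h : (c - 1) * (x - 1) ≤ 0) :
    c * (1 - x⁻¹) - log x ≤ 0 := by
  have hlog := one_sub_inv_le_log_of_pos hx
  have hshift : (c - 1) * (1 - x⁻¹) = (c - 1) * (x - 1) / x := by field_simp
  have := div_nonpos_of_nonpos_of_nonneg h hx.le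
  linarith

lemma deriv_klGap_nonneg (hx : 1 ≤ x) (hxc : x ≤ c) : 0 ≤ c * (1 - x⁻¹) - log x := by
  have hlog := log_le_sub_one_of_pos (zero_lt_one.trans_le hx)
  have hx' : x * (1 - x⁻¹) = x - 1 := by field_simp
  have : x * (1 - x⁻¹) ≤ c * (1 - x⁻¹) :=
    mul_le_mul_of_nonneg_right hxc (sub_nonneg.2 (inv_le_one_of_one_le₀ hx))
  linarith

end DerivativeSign

lemma antitoneOn_deriv_klGap {c : ℝ} (hc : 0 < c) :
    AntitoneOn (fun x => c * (1 - x⁻¹) - log x) (Ici c) := by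
  intro s hs t ht hst
  have hs0 : 0 < s := hc.trans_le hs
  have ht0 : 0 < t := hs0.trans_le hst
  have hlog : 1 - s / t ≤ log t - log s := by
    have := one_sub_inv_le_log_of_pos (div_pos ht0 hs0)
    rwa [log_div ht0.ne' hs0.ne', inv_div] at this
  have hgap : (1 - s / t) - (c / s - c / t) = (s - c) * (t - s) / (s * t) := by field_simp
  have : 0 ≤ (s - c) * (t - s) / (s * t) :=
    div_nonneg (mul_nonneg (sub_nonneg.2 hs) (sub_nonneg.2 hst)) (by positivity)
  simp only [mul_sub, mul_one, ← div_eq_mul_inv]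
  linarith

lemma concaveOn_klGap {c : ℝ} (hc : 0 < c) : ConcaveOn ℝ (Ici c) (klGap c) := by
  have hD0 : Ici c ⊆ Ioi 0 := fun x hx => hc.trans_le hx
  have hderiv : ∀ x ∈ interior (Ici c), HasDerivAt (klGap c) (c * (1 - x⁻¹) - log x) x :=
    fun x hx => hasDerivAt_klGap c (hD0 (interior_subset hx))
  refine AntitoneOn.concaveOn_of_deriv (convex_Ici c) (continuousOn_klGap hD0)
    (fun x hx => (hderiv x hx).differentiableAt.differentiableWithinAt) ?_
  exact ((antitoneOn_deriv_klGap hc).mono interior_subset).congr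
    fun x hx => (hderiv x hx).deriv.symm

lemma revKLFun_le_klFun {x : ℝ} (hx : 1 ≤ x) : revKLFun x ≤ klFun x := by
  have hanti : AntitoneOn (klGap 1) (Icc 1 x) :=
    antitoneOn_klGap (convex_Icc 1 x) (fun y hy => zero_lt_one.trans_le hy.1)
      (fun y hy => deriv_klGap_nonpos (zero_lt_one.trans_le hy.1) (by simp))
  have := hanti (left_mem_Icc.2 hx) (right_mem_Icc.2 hx) hx
  rw [klGap_one, klGap, one_mul] at this
  linarith

lemma klGap_nonneg_of_le {c x : ℝ} (hc : 1 ≤ c) (hx : 0 < x) (hxc : x ≤ c) : 0 ≤ klGap c x := by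
  rw [← klGap_one c]
  rcases le_total x 1 with hx1 | hx1
  · refine antitoneOn_klGap (convex_Icc x 1) (fun y hy => hx.trans_le hy.1)
      (fun y hy => deriv_klGap_nonpos (hx.trans_le hy.1) ?_)
      (left_mem_Icc.2 hx1) (right_mem_Icc.2 hx1) hx1
    exact mul_nonpos_of_nonneg_of_nonpos (sub_nonneg.2 hc) (sub_nonpos.2 hy.2)
  · exact monotoneOn_klGap (convex_Icc 1 c) (fun y hy => zero_lt_one.trans_le hy.1)
      (fun y hy => deriv_klGap_nonneg hy.1 hy.2)
      (left_mem_Icc.2 hc) ⟨hx1, hxc⟩ hx1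

lemma klFun_le_mul_revKLFun {c z x : ℝ} (hc : 1 ≤ c) (hz : klFun z ≤ c * revKLFun z)
    (hx : 0 < x) (hxz : x ≤ z) : klFun x ≤ c * revKLFun x := by
  rw [← sub_nonneg]
  change 0 ≤ klGap c x
  rcases le_total x c with hxc | hcx
  · exact klGap_nonneg_of_le hc hx hxc
  · have hc0 : 0 < c := zero_lt_one.trans_le hc
    have hmin := (concaveOn_klGap hc0).min_le_of_mem_Icc self_mem_Ici (hcx.trans hxz)
      ⟨hcx, hxz⟩
    have hzc : 0 ≤ klGap c z := sub_nonneg.2 hz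
    exact (le_min (klGap_nonneg_of_le hc hc0 le_rfl) hzc).trans hmin

section Divergences

variable {ι : Type*} [Fintype ι] {P Q : ι → ℝ}

lemma sum_mul_log_div_eq_sum_mul_klFun (hQ : ∀ i, Q i ≠ 0) (hsum : ∑ i, P i = ∑ i, Q i) :
    ∑ i, P i * log (P i / Q i) = ∑ i, Q i * klFun (P i / Q i) := by
  have hterm : ∀ i, Q i * klFun (P i / Q i) = P i * log (P i / Q i) + (Q i - P i) := by
    intro i
    rw [klFun_apply]
    field_simp [hQ i]
    ring
  simp only [hterm, Finset.sum_add_distrib, Finset.sum_sub_distrib, hsum, sub_self, add_zero]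

lemma sum_mul_log_div_eq_sum_mul_revKLFun (hQ : ∀ i, Q i ≠ 0) (hsum : ∑ i, P i = ∑ i, Q i) :
    ∑ i, Q i * log (Q i / P i) = ∑ i, Q i * revKLFun (P i / Q i) := by
  have hterm : ∀ i, Q i * revKLFun (P i / Q i) = Q i * log (Q i / P i) + (P i - Q i) := by
    intro i
    rw [revKLFun, ← inv_div, log_inv]
    field_simp [hQ i]
    ring
  simp only [hterm, Finset.sum_add_distrib, Finset.sum_sub_distrib, hsum, sub_self, add_zero]

end Divergences

theorem kl_le_kappa1_mul_reverse_kl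
    {A : Type*} [Fintype A] [Nonempty A]
    (P Q : A → ℝ)
    (hP_pos : ∀ a, 0 < P a) (hQ_pos : ∀ a, 0 < Q a)
    (hP_sum : ∑ a, P a = 1) (hQ_sum : ∑ a, Q a = 1)
    (hne : P ≠ Q)
    (ζ : ℝ) (hζ : ζ = Finset.univ.sup' Finset.univ_nonempty (fun a => P a / Q a)) :
    ∑ a, P a * Real.log (P a / Q a) ≤
      ((ζ * Real.log ζ + 1 - ζ) / ((ζ - 1) - Real.log ζ)) *
        ∑ a, Q a * Real.log (Q a / P a) := by
  have hsum : ∑ a, P a = ∑ a, Q a := hP_sum.trans hQ_sum.symm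
  have hQ : ∀ a, Q a ≠ 0 := fun a => (hQ_pos a).ne'
  have hle : ∀ a, P a / Q a ≤ ζ := fun a => hζ ▸ Finset.le_sup' (fun a => P a / Q a) (Finset.mem_univ a)
  obtain ⟨a₀, ha₀⟩ := exists_lt_of_sum_eq_of_ne hsum hne
  have hζ1 : 1 < ζ := ((one_lt_div (hQ_pos a₀)).2 ha₀).trans_le (hle a₀)
  have hrev : 0 < revKLFun ζ := revKLFun_pos (zero_lt_one.trans hζ1) hζ1.ne'
  change ∑ a, P a * log (P a / Q a) ≤ klFun ζ / revKLFun ζ * ∑ a, Q a * log (Q a / P a)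
  have hc : 1 ≤ klFun ζ / revKLFun ζ := by
    rw [le_div_iff₀ hrev, one_mul]
    exact revKLFun_le_klFun hζ1.le
  have hζc : klFun ζ ≤ klFun ζ / revKLFun ζ * revKLFun ζ := (div_mul_cancel₀ _ hrev.ne').ge
  rw [sum_mul_log_div_eq_sum_mul_klFun hQ hsum, sum_mul_log_div_eq_sum_mul_revKLFun hQ hsum,
    Finset.mul_sum]
  refine Finset.sum_le_sum fun a _ => ?_
  rw [mul_left_comm]
  exact mul_le_mul_of_nonneg_left
    (klFun_le_mul_revKLFun hc hζc (div_pos (hP_pos a) (hQ_pos a)) (hle a)) (hQ_pos a).le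
end

section
/- Let P, Q be probability mass functions on a finite set A with full support and P ≠ Q. Let ζ = exp(D_∞(P‖Q)) with D_∞(P‖Q) = log(max_a P(a)/Q(a)). Then χ²(P‖Q) ≤ KL(P‖Q)/κ₂(ζ), where χ²(P‖Q) = Σ_a P(a)²/Q(a) − 1 and κ₂(t) = (t·log t + 1 − t)/(t − 1)². -/
/-!
Write `f t = t log t + 1 - t` (Mathlib's `klFun`), so that `KL(P‖Q) = ∑ Q f(P/Q)` and
`χ²(P‖Q) = ∑ Q (P/Q - 1)²`. The function `κ₂ t = f t / (t - 1)²` is decreasing, so every ratio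
`t = P a / Q a ≤ ζ` satisfies `κ₂ ζ (t - 1)² ≤ f t`; summing against `Q` gives the claim.
Monotonicity on `(1, ∞)` reduces to `log t ≥ 2 (t - 1) / (t + 1)`; across `t = 1` it suffices that
`κ₂ ≥ 1/2` on `(0, 1]` and `κ₂ ≤ 1/2` on `(1, ∞)`, i.e. that `log t` and `sinh (log t)` compare.
-/

open Real InformationTheory Set

lemma klFun_le_sq_div_two {t : ℝ} (ht : 1 ≤ t) : klFun t ≤ (t - 1) ^ 2 / 2 := by
  have ht0 : 0 < t := zero_lt_one.trans_le ht
  have hlog : log t ≤ (t - t⁻¹) / 2 := sinh_log ht0 ▸ self_le_sinh_iff.2 (log_nonneg ht)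
  have : t * log t ≤ t * ((t - t⁻¹) / 2) := mul_le_mul_of_nonneg_left hlog ht0.le
  rw [klFun_apply]
  field_simp at this ⊢
  nlinarith

lemma sq_div_two_le_klFun {t : ℝ} (ht0 : 0 < t) (ht : t ≤ 1) : (t - 1) ^ 2 / 2 ≤ klFun t := by
  have hlog : (t - t⁻¹) / 2 ≤ log t := sinh_log ht0 ▸ sinh_le_self_iff.2 (log_nonpos ht0.le ht)
  have : t * ((t - t⁻¹) / 2) ≤ t * log t := mul_le_mul_of_nonneg_left hlog ht0.le
  rw [klFun_apply]
  field_simp at this ⊢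
  nlinarith

/-- The left side is the first term of the positive series
`log t = 2 ∑ₖ x ^ (2k + 1) / (2k + 1)`, `x = (t - 1) / (t + 1)`. -/
lemma two_mul_sub_one_div_add_one_le_log {t : ℝ} (ht : 1 < t) :
    2 * (t - 1) / (t + 1) ≤ log t := by
  have ht1 : 0 < t - 1 := sub_pos.2 ht
  have hx : 1 / (2 * (t - 1)⁻¹ + 1) = (t - 1) / (t + 1) := by field_simp; ring
  have h0 := le_hasSum (hasSum_log_one_add_inv (inv_pos.2 ht1)) 0 fun k _ => by
    have : 0 < t + 1 := by linarith
    rw [hx]; positivity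
  rw [hx, inv_inv, add_sub_cancel] at h0
  simpa [mul_div_assoc] using h0

/-- At `t = 1` this is the junk value `0 / 0 = 0`. -/
noncomputable def kappa2 (t : ℝ) : ℝ := klFun t / (t - 1) ^ 2

lemma hasDerivAt_kappa2 {t : ℝ} (ht : 1 < t) :
    HasDerivAt kappa2 ((2 * (t - 1) - (t + 1) * log t) / (t - 1) ^ 3) t := by
  have ht1 : t - 1 ≠ 0 := (sub_pos.2 ht).ne'
  refine ((hasDerivAt_klFun (by positivity : t ≠ 0)).div
    (((hasDerivAt_id t).sub_const 1).pow 2) (pow_ne_zero 2 ht1)).congr_deriv ?_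
  simp only [klFun_apply, Pi.pow_apply, id]
  field_simp
  ring

lemma antitoneOn_kappa2 : AntitoneOn kappa2 (Ioi 1) := by
  refine antitoneOn_of_hasDerivWithinAt_nonpos (convex_Ioi 1)
    (f' := fun t => (2 * (t - 1) - (t + 1) * log t) / (t - 1) ^ 3)
    (fun t ht => (hasDerivAt_kappa2 ht).continuousAt.continuousWithinAt) ?_ ?_ <;>
    rw [interior_Ioi]
  · exact fun t ht => (hasDerivAt_kappa2 ht).hasDerivWithinAt
  intro t ht
  have ht1 : 0 < t - 1 := sub_pos.2 ht
  have hlog := two_mul_sub_one_div_add_one_le_log ht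
  rw [div_le_iff₀ (by linarith)] at hlog
  exact div_nonpos_of_nonpos_of_nonneg (by linarith) (by positivity)

lemma kappa2_pos {t : ℝ} (ht : 1 < t) : 0 < kappa2 t := by
  have ht0 : 0 ≤ t := by linarith
  have hf : 0 < klFun t :=
    (klFun_nonneg ht0).lt_of_ne' fun h => ht.ne' ((klFun_eq_zero_iff ht0).1 h)
  exact div_pos hf (pow_pos (sub_pos.2 ht) 2)

lemma kappa2_le_half {t : ℝ} (ht : 1 < t) : kappa2 t ≤ 1 / 2 := by
  rw [kappa2, div_le_iff₀ (pow_pos (sub_pos.2 ht) 2)]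
  linarith [klFun_le_sq_div_two ht.le]

lemma kappa2_mul_sq_le_klFun {ζ t : ℝ} (hζ : 1 < ζ) (ht : 0 < t) (htζ : t ≤ ζ) :
    kappa2 ζ * (t - 1) ^ 2 ≤ klFun t := by
  rcases le_or_gt t 1 with ht1 | ht1
  · calc kappa2 ζ * (t - 1) ^ 2 ≤ 1 / 2 * (t - 1) ^ 2 := by
          gcongr; exact kappa2_le_half hζ
      _ ≤ klFun t := by linarith [sq_div_two_le_klFun ht ht1]
  · calc kappa2 ζ * (t - 1) ^ 2 ≤ kappa2 t * (t - 1) ^ 2 := by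
          gcongr; exact antitoneOn_kappa2 ht1 (ht1.trans_le htζ) htζ
      _ = klFun t := div_mul_cancel₀ _ (pow_pos (sub_pos.2 ht1) 2).ne'

section FiniteSums

variable {ι : Type*} [Fintype ι] {P Q : ι → ℝ}

lemma sum_mul_sq_div_sub_one (hQ : ∀ i, Q i ≠ 0) (hP_sum : ∑ i, P i = 1)
    (hQ_sum : ∑ i, Q i = 1) : ∑ i, Q i * (P i / Q i - 1) ^ 2 = ∑ i, P i ^ 2 / Q i - 1 := by
  have h (i : ι) : Q i * (P i / Q i - 1) ^ 2 = P i ^ 2 / Q i - 2 * P i + Q i := by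
    field_simp [hQ i]; ring
  simp only [h, Finset.sum_add_distrib, Finset.sum_sub_distrib, ← Finset.mul_sum, hP_sum, hQ_sum]
  ring

lemma sum_mul_klFun_div (hQ : ∀ i, Q i ≠ 0) (hsum : ∑ i, P i = ∑ i, Q i) :
    ∑ i, Q i * klFun (P i / Q i) = ∑ i, P i * log (P i / Q i) := by
  have h (i : ι) : Q i * klFun (P i / Q i) = P i * log (P i / Q i) + Q i - P i := by
    rw [klFun_apply]; field_simp [hQ i]
  simp only [h, Finset.sum_sub_distrib, Finset.sum_add_distrib, hsum, add_sub_cancel_right]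

lemma one_lt_sup'_div [Nonempty ι] (hQ : ∀ i, 0 < Q i) (hsum : ∑ i, P i = ∑ i, Q i)
    (hne : P ≠ Q) : 1 < Finset.univ.sup' Finset.univ_nonempty (fun i => P i / Q i) := by
  rw [Finset.lt_sup'_iff]
  by_contra! hle
  have hPQ (i : ι) : P i ≤ Q i := by simpa [div_le_one (hQ i)] using hle i
  exact hne (funext fun i =>
    (Finset.sum_eq_sum_iff_of_le fun i _ => hPQ i).1 hsum i (Finset.mem_univ i))

end FiniteSums

theorem chisq_le_kl_div_kappa2
    {A : Type*} [Fintype A] [Nonempty A]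
    (P Q : A → ℝ)
    (hP_pos : ∀ a, 0 < P a) (hQ_pos : ∀ a, 0 < Q a)
    (hP_sum : ∑ a, P a = 1) (hQ_sum : ∑ a, Q a = 1)
    (hne : P ≠ Q)
    (ζ : ℝ) (hζ : ζ = Finset.univ.sup' Finset.univ_nonempty (fun a => P a / Q a)) :
    (∑ a, (P a) ^ 2 / Q a) - 1 ≤
      (∑ a, P a * Real.log (P a / Q a)) /
        ((ζ * Real.log ζ + 1 - ζ) / (ζ - 1) ^ 2) := by
  have hQ (a : A) : Q a ≠ 0 := (hQ_pos a).ne'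
  have hsum : ∑ a, P a = ∑ a, Q a := hP_sum.trans hQ_sum.symm
  have hζ1 : 1 < ζ := hζ ▸ one_lt_sup'_div hQ_pos hsum hne
  have hratio (a : A) : P a / Q a ≤ ζ :=
    hζ ▸ Finset.le_sup' (fun a => P a / Q a) (Finset.mem_univ a)
  change _ ≤ _ / kappa2 ζ
  rw [le_div_iff₀ (kappa2_pos hζ1), ← sum_mul_sq_div_sub_one hQ hP_sum hQ_sum,
    ← sum_mul_klFun_div hQ hsum, Finset.sum_mul]
  refine Finset.sum_le_sum fun a _ => ?_
  rw [mul_assoc, mul_comm _ (kappa2 ζ)]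
  exact mul_le_mul_of_nonneg_left
    (kappa2_mul_sq_le_klFun hζ1 (div_pos (hP_pos a) (hQ_pos a)) (hratio a)) (hQ_pos a).le
end

section
/- The function κ(x) = (x − 1)²/(x − 1 − log x) is monotonically increasing on (1, ∞). -/
/-!
Writing `q x = x - 1 - log x > 0`, the quotient rule gives
`κ' x = (x - 1) (x - x⁻¹ - 2 log x) / q x ^ 2`, and `2 log x < x - x⁻¹` for `x > 1` is the
inequality `t < sinh t` at `t = log x`.
-/

open Real Set

noncomputable def kappa (x : ℝ) : ℝ := (x - 1) ^ 2 / (x - 1 - log x)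

lemma two_mul_log_lt_sub_inv {x : ℝ} (hx : 1 < x) : 2 * log x < x - x⁻¹ := by
  have h := self_lt_sinh_iff.mpr (log_pos hx)
  rw [sinh_log (by linarith)] at h
  linarith

lemma sub_one_sub_log_pos {x : ℝ} (hx : 1 < x) : 0 < x - 1 - log x := by
  linarith [log_lt_sub_one_of_pos (by linarith : 0 < x) hx.ne']

lemma hasDerivAt_kappa {x : ℝ} (hx : 1 < x) :
    HasDerivAt kappa ((x - 1) * (x - x⁻¹ - 2 * log x) / (x - 1 - log x) ^ 2) x := by
  have hx0 : x ≠ 0 := by positivity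
  have hnum : HasDerivAt (fun x : ℝ => (x - 1) ^ 2) (2 * (x - 1)) x := by
    simpa using ((hasDerivAt_id x).sub_const 1).fun_pow 2
  have hden : HasDerivAt (fun x : ℝ => x - 1 - log x) (1 - x⁻¹) x :=
    ((hasDerivAt_id x).sub_const 1).sub (hasDerivAt_log hx0)
  refine (hnum.fun_div hden (sub_one_sub_log_pos hx).ne').congr_deriv ?_
  field_simp
  ring

lemma strictMonoOn_kappa : StrictMonoOn kappa (Ioi 1) := by
  refine strictMonoOn_of_hasDerivWithinAt_pos (convex_Ioi 1)
    (fun x hx => (hasDerivAt_kappa hx).continuousAt.continuousWithinAt)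
    (fun x hx => (hasDerivAt_kappa (by rwa [interior_Ioi] at hx)).hasDerivWithinAt) ?_
  intro x hx
  rw [interior_Ioi, mem_Ioi] at hx
  have hgap : 0 < x - x⁻¹ - 2 * log x := by linarith [two_mul_log_lt_sub_inv hx]
  have hden : 0 < (x - 1 - log x) ^ 2 := pow_pos (sub_one_sub_log_pos hx) 2
  exact div_pos (mul_pos (by linarith) hgap) hden

theorem kappa_monotone :
    MonotoneOn (fun x : ℝ => (x - 1) ^ 2 / (x - 1 - Real.log x)) (Set.Ioi 1) :=
  strictMonoOn_kappa.monotoneOn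
end

section
/- Let A be a finite set, β > 0, π_ref a full-support probability mass function, r*: A → ℝ bounded, and π* the Gibbs policy π*(a) ∝ π_ref(a)exp(r*(a)/β). For a full-support pmf π define the coverage coefficient Cov(π*|π) = Σ_a π*(a)²/π(a). Then for any bounded reward r: A → ℝ with induced Gibbs policy π_r(a) ∝ π_ref(a)exp(r(a)/β), and any real b, Cov(π*|π_r) ≤ (Σ_a π*(a)·exp(|r*(a) − r(a) − b|/β))². -/
theorem coverage_gibbs_bound
    {A : Type*} [Fintype A] [Nonempty A]
    (β : ℝ) (hβ : 0 < β)
    (πref πstar πr : A → ℝ) (rstar r : A → ℝ) (b : ℝ)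
    (href_pos : ∀ a, 0 < πref a) (href_sum : ∑ a, πref a = 1)
    (Zstar : ℝ) (hZstar : Zstar = ∑ a, πref a * Real.exp (rstar a / β))
    (hgibbs_star : ∀ a, πstar a = πref a * Real.exp (rstar a / β) / Zstar)
    (Zr : ℝ) (hZr : Zr = ∑ a, πref a * Real.exp (r a / β))
    (hgibbs_r : ∀ a, πr a = πref a * Real.exp (r a / β) / Zr) :
    ∑ a, (πstar a) ^ 2 / πr a ≤
      (∑ a, πstar a * Real.exp (|rstar a - r a - b| / β)) ^ 2 := by
  have hZstar_pos : 0 < Zstar := by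
    rw [hZstar]
    exact Finset.sum_pos (fun a _ => mul_pos (href_pos a) (Real.exp_pos _)) Finset.univ_nonempty
  have hZr_pos : 0 < Zr := by
    rw [hZr]
    exact Finset.sum_pos (fun a _ => mul_pos (href_pos a) (Real.exp_pos _)) Finset.univ_nonempty
  set P := ∑ a, πstar a * Real.exp ((rstar a - r a) / β) with hP
  set Q := ∑ a, πstar a * Real.exp ((r a - rstar a) / β) with hQ
  set S := ∑ a, πstar a * Real.exp (|rstar a - r a - b| / β) with hS
  have hstar_pos : ∀ a, 0 < πstar a := fun a => by
    rw [hgibbs_star]; exact div_pos (mul_pos (href_pos a) (Real.exp_pos _)) hZstar_pos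
  have key : ∀ a, πstar a ^ 2 / πr a
      = Zr / Zstar * (πstar a * Real.exp ((rstar a - r a) / β)) := by
    intro a
    rw [hgibbs_star, hgibbs_r, sub_div, Real.exp_sub]
    have e1 := (Real.exp_pos (rstar a / β)).ne'
    have e2 := (Real.exp_pos (r a / β)).ne'
    have e3 := (href_pos a).ne'
    field_simp
  have hLHS : ∑ a, (πstar a) ^ 2 / πr a = Zr / Zstar * P := by
    rw [hP, Finset.mul_sum]
    exact Finset.sum_congr rfl fun a _ => key a
  have hZQ : Zr / Zstar = Q := by
    have : Zr = Zstar * Q := by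
      rw [hZr, hQ, Finset.mul_sum]
      refine Finset.sum_congr rfl fun a _ => ?_
      rw [hgibbs_star, sub_div, Real.exp_sub]
      have e1 := (Real.exp_pos (rstar a / β)).ne'
      field_simp
    rw [this]; field_simp
  have hP_bound : P ≤ Real.exp (b / β) * S := by
    rw [hP, hS, Finset.mul_sum]
    refine Finset.sum_le_sum fun a _ => ?_
    rw [← mul_assoc, mul_comm (Real.exp (b / β)) (πstar a), mul_assoc]
    refine mul_le_mul_of_nonneg_left ?_ (hstar_pos a).le
    rw [← Real.exp_add, ← add_div]
    refine Real.exp_le_exp.mpr (div_le_div_of_nonneg_right ?_ hβ.le)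
    have := le_abs_self (rstar a - r a - b)
    linarith
  have hQ_bound : Q ≤ Real.exp (-b / β) * S := by
    rw [hQ, hS, Finset.mul_sum]
    refine Finset.sum_le_sum fun a _ => ?_
    rw [← mul_assoc, mul_comm (Real.exp (-b / β)) (πstar a), mul_assoc]
    refine mul_le_mul_of_nonneg_left ?_ (hstar_pos a).le
    rw [← Real.exp_add, ← add_div]
    refine Real.exp_le_exp.mpr (div_le_div_of_nonneg_right ?_ hβ.le)
    have := neg_abs_le (rstar a - r a - b)
    linarith
  have hP_nonneg : 0 ≤ P :=
    Finset.sum_nonneg fun a _ => mul_nonneg (hstar_pos a).le (Real.exp_pos _).le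
  have hS_nonneg : 0 ≤ S :=
    Finset.sum_nonneg fun a _ => mul_nonneg (hstar_pos a).le (Real.exp_pos _).le
  rw [hLHS, hZQ]
  calc Q * P ≤ (Real.exp (-b / β) * S) * (Real.exp (b / β) * S) := by
        exact mul_le_mul hQ_bound hP_bound hP_nonneg (mul_nonneg (Real.exp_pos _).le hS_nonneg)
    _ = S ^ 2 := by
        rw [mul_mul_mul_comm, ← Real.exp_add]
        have : -b / β + b / β = 0 := by ring
        rw [this, Real.exp_zero, one_mul, sq]
end

section
/- Let u, v be probability mass functions on a finite totally-ordered set A = {a₁,…,a_m}, ordered so that a reward r satisfies r(a_i) ≤ r(a_j) for i < j. Suppose a preference model P(y=1|a,a') ∈ [0,1] satisfies P(y=1|a,a') ≥ 1/2 whenever r(a) ≥ r(a'). Then for every γ > 0, Σ_a √(u(a)v(a)) ≤ √((γ + 2·P(v ≻ u))·log((1+γ)/γ)), where P(v ≻ u) = Σ_{a,a'} v(a)u(a')P(y=1|a,a'). -/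
open Finset Real

/-- Telescoping log bound: `∑ i < n, u i / (γ + ∑_{j ≤ i} u j) ≤ log((γ + total)/γ)`. -/
private lemma telescope_log (n : ℕ) (u : ℕ → ℝ) (hu : ∀ i, 0 ≤ u i) (γ : ℝ) (hγ : 0 < γ) :
    ∑ i ∈ range n, u i / (γ + ∑ j ∈ range (i + 1), u j) ≤
      Real.log (γ + ∑ j ∈ range n, u j) - Real.log γ := by
  have hpos : ∀ k, 0 < γ + ∑ j ∈ range k, u j := fun k =>
    add_pos_of_pos_of_nonneg hγ (sum_nonneg fun j _ => hu j)
  have key : ∀ i, u i / (γ + ∑ j ∈ range (i + 1), u j) ≤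
      Real.log (γ + ∑ j ∈ range (i + 1), u j) - Real.log (γ + ∑ j ∈ range i, u j) := by
    intro i
    set a := γ + ∑ j ∈ range i, u j with ha
    set b := γ + ∑ j ∈ range (i + 1), u j with hb
    have hab : b = a + u i := by rw [ha, hb, sum_range_succ]; ring
    have ha0 : 0 < a := hpos i
    have hb0 : 0 < b := hpos (i + 1)
    have h1 : Real.log (a / b) ≤ a / b - 1 :=
      Real.log_le_sub_one_of_pos (div_pos ha0 hb0)
    rw [Real.log_div ha0.ne' hb0.ne'] at h1
    have h2 : u i / b = 1 - a / b := by
      field_simp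
      linarith [hab]
    linarith
  calc ∑ i ∈ range n, u i / (γ + ∑ j ∈ range (i + 1), u j)
      ≤ ∑ i ∈ range n, (Real.log (γ + ∑ j ∈ range (i + 1), u j)
          - Real.log (γ + ∑ j ∈ range i, u j)) := sum_le_sum fun i _ => key i
    _ = Real.log (γ + ∑ j ∈ range n, u j) - Real.log (γ + ∑ j ∈ range 0, u j) :=
        sum_range_sub (fun k => Real.log (γ + ∑ j ∈ range k, u j)) n
    _ = Real.log (γ + ∑ j ∈ range n, u j) - Real.log γ := by simp

/-- Core inequality over `range n`. -/
private lemma aux_bound (n : ℕ) (u v : ℕ → ℝ) (hu : ∀ i, 0 ≤ u i) (hv : ∀ i, 0 ≤ v i)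
    (hus : ∑ i ∈ range n, u i = 1) (hvs : ∑ i ∈ range n, v i = 1)
    (γ : ℝ) (hγ : 0 < γ) :
    (∑ i ∈ range n, Real.sqrt (u i * v i)) ^ 2 ≤
      (γ + ∑ i ∈ range n, v i * ∑ j ∈ range (i + 1), u j) * Real.log ((1 + γ) / γ) := by
  set U : ℕ → ℝ := fun i => γ + ∑ j ∈ range (i + 1), u j with hU
  have hUpos : ∀ i, 0 < U i := fun i =>
    add_pos_of_pos_of_nonneg hγ (sum_nonneg fun j _ => hu j)
  have cs : (∑ i ∈ range n, Real.sqrt (u i * v i)) ^ 2 ≤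
      (∑ i ∈ range n, u i / U i) * ∑ i ∈ range n, v i * U i := by
    refine sum_sq_le_sum_mul_sum_of_sq_eq_mul (range n)
      (fun i _ => div_nonneg (hu i) (hUpos i).le)
      (fun i _ => mul_nonneg (hv i) (hUpos i).le)
      (fun i _ => ?_)
    rw [Real.sq_sqrt (mul_nonneg (hu i) (hv i)), eq_comm, div_mul_eq_mul_div,
      div_eq_iff (hUpos i).ne']
    ring
  have hA : ∑ i ∈ range n, u i / U i ≤ Real.log ((1 + γ) / γ) := by
    have := telescope_log n u hu γ hγ
    rw [hus] at this
    calc ∑ i ∈ range n, u i / U i ≤ Real.log (γ + 1) - Real.log γ := this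
      _ = Real.log ((1 + γ) / γ) := by
          rw [Real.log_div (by linarith) hγ.ne']
          ring_nf
  have hB : ∑ i ∈ range n, v i * U i
      = γ + ∑ i ∈ range n, v i * ∑ j ∈ range (i + 1), u j := by
    simp only [hU, mul_add, sum_add_distrib, ← sum_mul, hvs]
    ring
  have hBnn : 0 ≤ ∑ i ∈ range n, v i * U i :=
    sum_nonneg fun i _ => mul_nonneg (hv i) (hUpos i).le
  calc (∑ i ∈ range n, Real.sqrt (u i * v i)) ^ 2
      ≤ (∑ i ∈ range n, u i / U i) * ∑ i ∈ range n, v i * U i := cs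
    _ ≤ Real.log ((1 + γ) / γ) * ∑ i ∈ range n, v i * U i := by
        exact mul_le_mul_of_nonneg_right hA hBnn
    _ = (γ + ∑ i ∈ range n, v i * ∑ j ∈ range (i + 1), u j) * Real.log ((1 + γ) / γ) := by
        rw [hB]; ring

theorem bhattacharyya_le_winrate_bound
    (m : ℕ) (hm : 0 < m)
    (u v : Fin m → ℝ) (r : Fin m → ℝ) (P : Fin m → Fin m → ℝ)
    (hu_nonneg : ∀ a, 0 ≤ u a) (hu_sum : ∑ a, u a = 1)
    (hv_nonneg : ∀ a, 0 ≤ v a) (hv_sum : ∑ a, v a = 1)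
    (hr_mono : Monotone r)
    (hP_mem : ∀ a a', P a a' ∈ Set.Icc (0 : ℝ) 1)
    (hP_half : ∀ a a', r a' ≤ r a → (1 : ℝ) / 2 ≤ P a a') :
    ∀ γ : ℝ, 0 < γ →
      ∑ a, Real.sqrt (u a * v a) ≤
        Real.sqrt ((γ + 2 * ∑ a, ∑ a', v a * u a' * P a a') *
          Real.log ((1 + γ) / γ)) := by
  intro γ hγ
  -- extend to ℕ
  set u' : ℕ → ℝ := fun k => if h : k < m then u ⟨k, h⟩ else 0 with hu'
  set v' : ℕ → ℝ := fun k => if h : k < m then v ⟨k, h⟩ else 0 with hv'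
  have hu'app : ∀ a : Fin m, u' (a : ℕ) = u a := fun a => dif_pos a.isLt
  have hv'app : ∀ a : Fin m, v' (a : ℕ) = v a := fun a => dif_pos a.isLt
  have hu'nn : ∀ k, 0 ≤ u' k := by
    intro k; simp only [hu']; split_ifs; exacts [hu_nonneg _, le_rfl]
  have hv'nn : ∀ k, 0 ≤ v' k := by
    intro k; simp only [hv']; split_ifs; exacts [hv_nonneg _, le_rfl]
  have hu's : ∑ k ∈ range m, u' k = 1 := by
    rw [← Fin.sum_univ_eq_sum_range u' m]
    simpa only [hu'app] using hu_sum
  have hv's : ∑ k ∈ range m, v' k = 1 := by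
    rw [← Fin.sum_univ_eq_sum_range v' m]
    simpa only [hv'app] using hv_sum
  have hL0 : 0 ≤ Real.log ((1 + γ) / γ) :=
    Real.log_nonneg (by rw [le_div_iff₀ hγ]; linarith)
  -- LHS as a range sum
  have hLHS : ∑ a, Real.sqrt (u a * v a) = ∑ k ∈ range m, Real.sqrt (u' k * v' k) := by
    rw [← Fin.sum_univ_eq_sum_range (fun k => Real.sqrt (u' k * v' k)) m]
    exact Finset.sum_congr rfl fun a _ => by rw [hu'app, hv'app]
  -- the overlap sum S
  set S : ℝ := ∑ i ∈ range m, v' i * ∑ j ∈ range (i + 1), u' j with hS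
  -- S ≤ 2 * W
  have hSW : S ≤ 2 * ∑ a, ∑ a', v a * u a' * P a a' := by
    have hstep : ∀ i ∈ range m, v' i * ∑ j ∈ range (i + 1), u' j
        = v' i * ∑ j ∈ range m, (if j ≤ i then u' j else 0) := by
      intro i hi
      congr 1
      rw [sum_ite, sum_const_zero, add_zero]
      apply Finset.sum_congr _ (fun _ _ => rfl)
      ext j
      simp only [mem_filter, mem_range, Nat.lt_succ_iff]
      constructor
      · intro hj; exact ⟨lt_of_le_of_lt hj (mem_range.mp hi), hj⟩
      · intro hj; exact hj.2
    rw [hS, Finset.sum_congr rfl hstep]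
    have hfin : ∑ i ∈ range m, v' i * ∑ j ∈ range m, (if j ≤ i then u' j else 0)
        = ∑ a : Fin m, v a * ∑ a' : Fin m, (if (a' : ℕ) ≤ (a : ℕ) then u a' else 0) := by
      rw [← Fin.sum_univ_eq_sum_range (fun i => v' i * ∑ j ∈ range m, (if j ≤ i then u' j else 0)) m]
      refine Finset.sum_congr rfl fun a _ => ?_
      rw [hv'app]
      congr 1
      rw [← Fin.sum_univ_eq_sum_range (fun j => if j ≤ (a : ℕ) then u' j else 0) m]
      exact Finset.sum_congr rfl fun a' _ => by rw [hu'app]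
    rw [hfin, Finset.mul_sum]
    refine Finset.sum_le_sum fun a _ => ?_
    rw [Finset.mul_sum, Finset.mul_sum]
    refine Finset.sum_le_sum fun a' _ => ?_
    by_cases h : (a' : ℕ) ≤ (a : ℕ)
    · rw [if_pos h]
      have hP : (1 : ℝ) / 2 ≤ P a a' := hP_half a a' (hr_mono (Fin.le_def.mpr h))
      have := mul_le_mul_of_nonneg_left hP (mul_nonneg (hv_nonneg a) (hu_nonneg a'))
      nlinarith [mul_nonneg (hv_nonneg a) (hu_nonneg a')]
    · rw [if_neg h, mul_zero]
      exact mul_nonneg (by norm_num)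
        (mul_nonneg (mul_nonneg (hv_nonneg a) (hu_nonneg a')) (hP_mem a a').1)
  have key := aux_bound m u' v' hu'nn hv'nn hu's hv's γ hγ
  rw [hLHS]
  have hsqnn : 0 ≤ ∑ k ∈ range m, Real.sqrt (u' k * v' k) :=
    sum_nonneg fun k _ => Real.sqrt_nonneg _
  rw [← Real.sqrt_sq hsqnn]
  apply Real.sqrt_le_sqrt
  calc (∑ k ∈ range m, Real.sqrt (u' k * v' k)) ^ 2
      ≤ (γ + S) * Real.log ((1 + γ) / γ) := key
    _ ≤ (γ + 2 * ∑ a, ∑ a', v a * u a' * P a a') * Real.log ((1 + γ) / γ) := by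
        apply mul_le_mul_of_nonneg_right _ hL0
        linarith [hSW]
end

section
/- Let F(a_i) = Σ_{j≤i} u(a_j) be the cumulative distribution of a pmf u on an ordered finite set {a₁,…,a_m}. For any γ > 0, Σ_{i=1}^m u(a_i)/(γ + F(a_i)) ≤ log((1+γ)/γ). -/
/-!
With `S_k = γ + u(a₁) + ⋯ + u(a_k)`, the `k`-th summand is `(S_k - S_{k-1}) / S_k = 1 - S_{k-1} / S_k`,
which `1 - x ≤ log (1 / x)` bounds by `log S_k - log S_{k-1}`. The bounds telescope to
`log S_m - log S_0 = log (1 + γ) - log γ`.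
-/

open Finset Real

theorem sub_div_le_log_sub_log {a b : ℝ} (ha : 0 < a) (hb : 0 < b) :
    (b - a) / b ≤ log b - log a := by
  have h := one_sub_inv_le_log_of_pos (div_pos hb ha)
  rw [sub_div, div_self hb.ne']
  rwa [inv_div, log_div hb.ne' ha.ne'] at h

theorem Finset.sum_div_add_cumsum_le_log_sub_log {α : Type*} [LinearOrder α] (s : Finset α)
    {u : α → ℝ} (hu : ∀ a ∈ s, 0 ≤ u a) {γ : ℝ} (hγ : 0 < γ) :
    ∑ a ∈ s, u a / (γ + ∑ b ∈ s.filter (· ≤ a), u b) ≤ log (γ + ∑ a ∈ s, u a) - log γ := by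
  induction s using Finset.induction_on_max with
  | empty => simp
  | insert a s ha ih =>
    have ha_notMem : a ∉ s := fun h => lt_irrefl a (ha a h)
    have hu_s : ∀ x ∈ s, 0 ≤ u x := fun x hx => hu x (mem_insert_of_mem hx)
    have hpos : 0 < γ + ∑ b ∈ s, u b := add_pos_of_pos_of_nonneg hγ (sum_nonneg hu_s)
    have hlast : (insert a s).filter (· ≤ a) = insert a s :=
      filter_true_of_mem fun x hx => by
        rcases mem_insert.1 hx with rfl | hx
        exacts [le_rfl, (ha x hx).le]
    have hprefix : ∀ x ∈ s, (insert a s).filter (· ≤ x) = s.filter (· ≤ x) := fun x hx => by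
      rw [filter_insert, if_neg (ha x hx).not_ge]
    have hnew := sub_div_le_log_sub_log hpos
      (add_pos_of_pos_of_nonneg hpos (hu a (mem_insert_self a s)))
    rw [add_sub_cancel_left] at hnew
    calc ∑ x ∈ insert a s, u x / (γ + ∑ b ∈ (insert a s).filter (· ≤ x), u b)
        = u a / (γ + ∑ b ∈ s, u b + u a)
            + ∑ x ∈ s, u x / (γ + ∑ b ∈ s.filter (· ≤ x), u b) := by
          rw [sum_insert ha_notMem, hlast, sum_insert ha_notMem, add_comm (u a), ← add_assoc]
          exact congrArg _ (sum_congr rfl fun x hx => by rw [hprefix x hx])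
      _ ≤ (log (γ + ∑ b ∈ s, u b + u a) - log (γ + ∑ b ∈ s, u b))
            + (log (γ + ∑ b ∈ s, u b) - log γ) := add_le_add hnew (ih hu_s)
      _ = log (γ + ∑ b ∈ insert a s, u b) - log γ := by
          rw [sum_insert ha_notMem, add_comm (u a), ← add_assoc]
          ring

theorem cdf_weighted_sum_le_log_general
    (m : ℕ)
    (u : Fin m → ℝ)
    (hu_nonneg : ∀ a, 0 ≤ u a) (hu_sum : ∑ a, u a = 1)
    (F : Fin m → ℝ) (hF : ∀ i, F i = ∑ j ∈ Finset.univ.filter (fun j => j ≤ i), u j)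
    (γ : ℝ) (hγ : 0 < γ) :
    ∑ i, u i / (γ + F i) ≤ Real.log ((1 + γ) / γ) := by
  simp only [hF]
  have h := univ.sum_div_add_cumsum_le_log_sub_log (fun a _ => hu_nonneg a) hγ
  rwa [hu_sum, add_comm γ 1, ← log_div (by positivity) hγ.ne'] at h

theorem cdf_weighted_sum_le_log
    (m : ℕ) (hm : 0 < m)
    (u : Fin m → ℝ)
    (hu_nonneg : ∀ a, 0 ≤ u a) (hu_sum : ∑ a, u a = 1)
    (F : Fin m → ℝ) (hF : ∀ i, F i = ∑ j ∈ Finset.univ.filter (fun j => j ≤ i), u j)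
    (γ : ℝ) (hγ : 0 < γ) :
    ∑ i, u i / (γ + F i) ≤ Real.log ((1 + γ) / γ) :=
  cdf_weighted_sum_le_log_general m u hu_nonneg hu_sum F hF γ hγ
end

section
/- Let u, v be pmfs on a finite set A and suppose a preference model P(y=1|a,a') satisfies P(y=1|a,a') ≥ 1/2 whenever r(a) ≥ r(a') for a fixed reward r. Then 1 − TV(v, u) ≤ min over γ > 0 of √((γ + 2·P(v ≻ u))·log((1+γ)/γ)), where TV is total variation distance and P(v ≻ u) is the win rate of v over u. -/
/-! Let `F a = ∑_{r a' ≤ r a} u a'` be the `u`-mass of the actions with reward at most `r a`.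
Then `1 - TV(v, u) ≤ ∑ √(v u)`, and Cauchy–Schwarz with weights `γ + F` gives
`∑ √(v u) ≤ √(∑ v (γ + F)) · √(∑ u / (γ + F))`. Since `P a a' ≥ 1/2` whenever `r a' ≤ r a`,
`∑ v F ≤ 2 P(v ≻ u)`. Adding the actions in order of increasing reward shows that
`∑ u / (γ + F)` is a lower Riemann sum of `∫₀¹ dt / (γ + t) = log ((1 + γ) / γ)`. -/

open Finset Real

lemma div_add_le_log_add_sub_log {c x : ℝ} (hc : 0 < c) (hx : 0 ≤ x) :
    x / (c + x) ≤ log (c + x) - log c := by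
  have hcx : 0 < c + x := by linarith
  have key := one_sub_inv_le_log_of_pos (div_pos hcx hc)
  rwa [log_div hcx.ne' hc.ne', inv_div, one_sub_div hcx.ne', add_sub_cancel_left] at key

lemma sum_div_add_sum_filter_le_le_log_add_sub_log {ι α : Type*} [LinearOrder α] (r : ι → α)
    (u : ι → ℝ) {γ : ℝ} (hγ : 0 < γ) (s : Finset ι) (hu : ∀ a ∈ s, 0 ≤ u a) :
    ∑ a ∈ s, u a / (γ + ∑ a' ∈ s with r a' ≤ r a, u a') ≤
      log (γ + ∑ a ∈ s, u a) - log γ := by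
  classical
  induction s using Finset.induction_on_max_value r with
  | empty => simp
  | insert m s hms hmax ih =>
    have hu_s : ∀ a ∈ s, 0 ≤ u a := fun a ha => hu a (mem_insert_of_mem ha)
    have hS : 0 ≤ ∑ a ∈ s, u a := sum_nonneg hu_s
    have hmass_m : ∑ a' ∈ insert m s with r a' ≤ r m, u a' = u m + ∑ a ∈ s, u a := by
      rw [filter_true_of_mem fun a ha => ?_, sum_insert hms]
      rcases mem_insert.1 ha with rfl | ha
      exacts [le_rfl, hmax a ha]
    have hmass_s : ∀ a ∈ s, ∑ a' ∈ s with r a' ≤ r a, u a' ≤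
        ∑ a' ∈ insert m s with r a' ≤ r a, u a' := fun a _ =>
      sum_le_sum_of_subset_of_nonneg (filter_subset_filter _ (subset_insert m s))
        fun a' ha' _ => hu a' (filter_subset _ _ ha')
    have hlast :=
      div_add_le_log_add_sub_log (add_pos_of_pos_of_nonneg hγ hS) (hu m (mem_insert_self m s))
    calc ∑ a ∈ insert m s, u a / (γ + ∑ a' ∈ insert m s with r a' ≤ r a, u a')
        = u m / (γ + ∑ a ∈ s, u a + u m) +
            ∑ a ∈ s, u a / (γ + ∑ a' ∈ insert m s with r a' ≤ r a, u a') := by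
          rw [sum_insert hms, hmass_m, add_comm (u m), add_assoc]
      _ ≤ u m / (γ + ∑ a ∈ s, u a + u m) +
            ∑ a ∈ s, u a / (γ + ∑ a' ∈ s with r a' ≤ r a, u a') := by
          gcongr 1
          refine sum_le_sum fun a ha => div_le_div_of_nonneg_left (hu_s a ha) ?_ ?_
          · exact add_pos_of_pos_of_nonneg hγ
              (sum_nonneg fun a' ha' => hu_s a' (filter_subset _ _ ha'))
          · linarith [hmass_s a ha]
      _ ≤ log (γ + ∑ a ∈ insert m s, u a) - log γ := by
          rw [sum_insert hms, add_comm (u m), ← add_assoc]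
          linarith [ih hu_s]

lemma min_le_sqrt_mul {a b : ℝ} (ha : 0 ≤ a) (hb : 0 ≤ b) : min a b ≤ √(a * b) :=
  le_sqrt_of_sq_le <| (sq _).trans_le <|
    mul_le_mul (min_le_left a b) (min_le_right a b) (le_min ha hb) ha

lemma one_sub_half_sum_abs_sub_le_sum_sqrt_mul {A : Type*} [Fintype A] {u v : A → ℝ}
    (hu_nonneg : ∀ a, 0 ≤ u a) (hu_sum : ∑ a, u a = 1)
    (hv_nonneg : ∀ a, 0 ≤ v a) (hv_sum : ∑ a, v a = 1) :
    1 - (1 / 2) * ∑ a, |v a - u a| ≤ ∑ a, √(v a * u a) :=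
  calc 1 - (1 / 2) * ∑ a, |v a - u a| = ∑ a, (1 / 2) * (v a + u a - |v a - u a|) := by
        rw [← mul_sum, sum_sub_distrib, sum_add_distrib, hv_sum, hu_sum]
        ring
    _ = ∑ a, min (v a) (u a) := by
        refine sum_congr rfl fun a _ => ?_
        rw [abs_sub_comm, ← two_nsmul_inf_eq_add_sub_abs_sub, two_nsmul]
        ring
    _ ≤ ∑ a, √(v a * u a) :=
        sum_le_sum fun a _ => min_le_sqrt_mul (hv_nonneg a) (hu_nonneg a)

lemma sum_sqrt_mul_le_sqrt_sum_mul_mul_sqrt_sum_div {ι : Type*} (s : Finset ι)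
    {u v w : ι → ℝ} (hu : ∀ a, 0 ≤ u a) (hv : ∀ a, 0 ≤ v a) (hw : ∀ a, 0 < w a) :
    ∑ a ∈ s, √(v a * u a) ≤ √(∑ a ∈ s, v a * w a) * √(∑ a ∈ s, u a / w a) := by
  refine le_of_eq_of_le (sum_congr rfl fun a _ => ?_) <| sum_sqrt_mul_sqrt_le s
    (fun a => mul_nonneg (hv a) (hw a).le) (fun a => div_nonneg (hu a) (hw a).le)
  rw [← sqrt_mul (mul_nonneg (hv a) (hw a).le), mul_div_assoc', mul_right_comm,
    mul_div_cancel_right₀ _ (hw a).ne']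

lemma sum_mul_sum_filter_le_le_two_mul_sum_sum {A α : Type*} [Fintype A] [LinearOrder α]
    {u v : A → ℝ} {r : A → α} {P : A → A → ℝ} (hu : ∀ a, 0 ≤ u a) (hv : ∀ a, 0 ≤ v a)
    (hP_nonneg : ∀ a a', 0 ≤ P a a') (hP_half : ∀ a a', r a' ≤ r a → 1 / 2 ≤ P a a') :
    ∑ a, v a * ∑ a' with r a' ≤ r a, u a' ≤ 2 * ∑ a, ∑ a', v a * u a' * P a a' := by
  rw [mul_sum]
  refine sum_le_sum fun a _ => ?_
  rw [mul_sum, mul_sum, sum_filter]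
  refine sum_le_sum fun a' _ => ?_
  have hvu := mul_nonneg (hv a) (hu a')
  split_ifs with h
  · nlinarith [hP_half a a' h]
  · exact mul_nonneg zero_le_two (mul_nonneg hvu (hP_nonneg a a'))

theorem one_sub_tv_le_winrate_bound_general
    {A : Type*} [Fintype A]
    (u v : A → ℝ) (r : A → ℝ) (P : A → A → ℝ)
    (hu_nonneg : ∀ a, 0 ≤ u a) (hu_sum : ∑ a, u a = 1)
    (hv_nonneg : ∀ a, 0 ≤ v a) (hv_sum : ∑ a, v a = 1)
    (hP_mem : ∀ a a', P a a' ∈ Set.Icc (0 : ℝ) 1)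
    (hP_half : ∀ a a', r a' ≤ r a → (1 : ℝ) / 2 ≤ P a a') :
    ∀ γ : ℝ, 0 < γ →
      1 - (1 / 2) * ∑ a, |v a - u a| ≤
        Real.sqrt ((γ + 2 * ∑ a, ∑ a', v a * u a' * P a a') *
          Real.log ((1 + γ) / γ)) := by
  intro γ hγ
  set F : A → ℝ := fun a => ∑ a' with r a' ≤ r a, u a'
  have hγF : ∀ a, 0 < γ + F a := fun a =>
    add_pos_of_pos_of_nonneg hγ (sum_nonneg fun a' _ => hu_nonneg a')
  have hP_nonneg : ∀ a a', 0 ≤ P a a' := fun a a' => (hP_mem a a').1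
  have hv_weighted : ∑ a, v a * (γ + F a) ≤ γ + 2 * ∑ a, ∑ a', v a * u a' * P a a' := by
    have := sum_mul_sum_filter_le_le_two_mul_sum_sum hu_nonneg hv_nonneg hP_nonneg hP_half
    simp only [mul_add, sum_add_distrib, ← sum_mul, hv_sum]
    linarith
  have hu_weighted : ∑ a, u a / (γ + F a) ≤ log ((1 + γ) / γ) := by
    have := sum_div_add_sum_filter_le_le_log_add_sub_log r u hγ univ fun a _ => hu_nonneg a
    rwa [hu_sum, add_comm, ← log_div (by linarith) hγ.ne'] at this
  have hwin : 0 ≤ γ + 2 * ∑ a, ∑ a', v a * u a' * P a a' :=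
    (sum_nonneg fun a _ => mul_nonneg (hv_nonneg a) (hγF a).le).trans hv_weighted
  calc 1 - (1 / 2) * ∑ a, |v a - u a|
      ≤ ∑ a, √(v a * u a) :=
        one_sub_half_sum_abs_sub_le_sum_sqrt_mul hu_nonneg hu_sum hv_nonneg hv_sum
    _ ≤ √(∑ a, v a * (γ + F a)) * √(∑ a, u a / (γ + F a)) :=
        sum_sqrt_mul_le_sqrt_sum_mul_mul_sqrt_sum_div univ hu_nonneg hv_nonneg hγF
    _ ≤ √(γ + 2 * ∑ a, ∑ a', v a * u a' * P a a') * √(log ((1 + γ) / γ)) := by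
        gcongr
    _ = √((γ + 2 * ∑ a, ∑ a', v a * u a' * P a a') * log ((1 + γ) / γ)) :=
        (sqrt_mul hwin _).symm

theorem one_sub_tv_le_winrate_bound
    {A : Type*} [Fintype A] [Nonempty A]
    (u v : A → ℝ) (r : A → ℝ) (P : A → A → ℝ)
    (hu_nonneg : ∀ a, 0 ≤ u a) (hu_sum : ∑ a, u a = 1)
    (hv_nonneg : ∀ a, 0 ≤ v a) (hv_sum : ∑ a, v a = 1)
    (hP_mem : ∀ a a', P a a' ∈ Set.Icc (0 : ℝ) 1)
    (hP_half : ∀ a a', r a' ≤ r a → (1 : ℝ) / 2 ≤ P a a') :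
    ∀ γ : ℝ, 0 < γ →
      1 - (1 / 2) * ∑ a, |v a - u a| ≤
        Real.sqrt ((γ + 2 * ∑ a, ∑ a', v a * u a' * P a a') *
          Real.log ((1 + γ) / γ)) :=
  one_sub_tv_le_winrate_bound_general u v r P hu_nonneg hu_sum hv_nonneg hv_sum hP_mem hP_half
end

section
/- For probability mass functions P, Q on a finite set, exp(−KL(P‖Q)) ≤ 2·(1 − TV(P,Q)), i.e., 1 − TV(P,Q) ≥ (1/2)exp(−KL(P‖Q)) (Bretagnolle–Huber inequality). -/
/-!
Write `K` for the Kullback–Leibler divergence and `T = ∑ |P a - Q a|`. Jensen's inequality for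
`exp`, with weights `P`, bounds `exp (-K / 2)` by the Bhattacharyya coefficient `∑ √(P a Q a)`.
Writing `√(P Q) = √(min P Q) √(max P Q)`, Cauchy–Schwarz bounds its square by
`(∑ min P Q) (∑ max P Q) = (1 - t) (1 + t)` with `t = T / 2`, and this is at most `2 (1 - t)`
since the difference is `(1 - t) ^ 2`.
-/

open Finset Real

section
variable {ι : Type*} (s : Finset ι) (p q : ι → ℝ)

theorem sum_min_eq_half_sub_abs :
    ∑ i ∈ s, min (p i) (q i) = (∑ i ∈ s, p i + ∑ i ∈ s, q i - ∑ i ∈ s, |p i - q i|) / 2 := by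
  rw [← sum_add_distrib, ← sum_sub_distrib, sum_div]
  refine sum_congr rfl fun i _ => ?_
  have := min_add_max (p i) (q i)
  have := max_sub_min_eq_abs' (p i) (q i)
  linarith

theorem sum_max_eq_half_add_abs :
    ∑ i ∈ s, max (p i) (q i) = (∑ i ∈ s, p i + ∑ i ∈ s, q i + ∑ i ∈ s, |p i - q i|) / 2 := by
  rw [← sum_add_distrib, ← sum_add_distrib, sum_div]
  refine sum_congr rfl fun i _ => ?_
  have := min_add_max (p i) (q i)
  have := max_sub_min_eq_abs' (p i) (q i)
  linarith

variable {p q}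

theorem mul_exp_half_log_div_eq_sqrt_mul {x y : ℝ} (hx : 0 ≤ x) (hy : 0 ≤ y)
    (hxy : y = 0 → x = 0) : x * exp ((1 / 2) * log (y / x)) = √(x * y) := by
  rcases hx.eq_or_lt with rfl | hx
  · simp
  have hy : 0 < y := hy.lt_of_ne fun h => hx.ne' (hxy h.symm)
  rw [one_div_mul_eq_div, exp_half, exp_log (div_pos hy hx), sqrt_div' _ hx.le, sqrt_mul hx.le]
  nth_rw 1 [← mul_self_sqrt hx.le]
  field_simp

theorem exp_neg_half_sum_mul_log_div_le_sum_sqrt_mul (hp : ∀ i ∈ s, 0 ≤ p i)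
    (hp_sum : ∑ i ∈ s, p i = 1) (hq : ∀ i ∈ s, 0 ≤ q i) (hpq : ∀ i ∈ s, q i = 0 → p i = 0) :
    exp (-(1 / 2) * ∑ i ∈ s, p i * log (p i / q i)) ≤ ∑ i ∈ s, √(p i * q i) := by
  have hjensen := convexOn_exp.map_sum_le hp hp_sum (p := fun i => (1 / 2) * log (q i / p i))
    fun _ _ => Set.mem_univ _
  have hexponent : ∑ i ∈ s, p i • ((1 / 2) * log (q i / p i)) =
      -(1 / 2) * ∑ i ∈ s, p i * log (p i / q i) := by
    rw [mul_sum]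
    refine sum_congr rfl fun i _ => ?_
    rw [smul_eq_mul, ← inv_div (p i), log_inv]
    ring
  rw [← hexponent]
  refine hjensen.trans_eq (sum_congr rfl fun i hi => ?_)
  exact mul_exp_half_log_div_eq_sqrt_mul (hp i hi) (hq i hi) (hpq i hi)

theorem sq_sum_sqrt_mul_le_sum_min_mul_sum_max (hp : ∀ i ∈ s, 0 ≤ p i) (hq : ∀ i ∈ s, 0 ≤ q i) :
    (∑ i ∈ s, √(p i * q i)) ^ 2 ≤ (∑ i ∈ s, min (p i) (q i)) * ∑ i ∈ s, max (p i) (q i) := by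
  have hsplit : ∀ i ∈ s, √(p i * q i) = √(min (p i) (q i)) * √(max (p i) (q i)) := fun i hi => by
    rw [← sqrt_mul (le_min (hp i hi) (hq i hi)), min_mul_max]
  calc (∑ i ∈ s, √(p i * q i)) ^ 2
      = (∑ i ∈ s, √(min (p i) (q i)) * √(max (p i) (q i))) ^ 2 := by rw [sum_congr rfl hsplit]
    _ ≤ (∑ i ∈ s, √(min (p i) (q i)) ^ 2) * ∑ i ∈ s, √(max (p i) (q i)) ^ 2 :=
      sum_mul_sq_le_sq_mul_sq _ _ _
    _ = (∑ i ∈ s, min (p i) (q i)) * ∑ i ∈ s, max (p i) (q i) := by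
      congr 1 <;> refine sum_congr rfl fun i hi => sq_sqrt ?_
      · exact le_min (hp i hi) (hq i hi)
      · exact le_max_of_le_left (hp i hi)

end

theorem bretagnolle_huber_general
    {A : Type*} [Fintype A]
    (P Q : A → ℝ)
    (hP_nonneg : ∀ a, 0 ≤ P a) (hP_sum : ∑ a, P a = 1)
    (hQ_nonneg : ∀ a, 0 ≤ Q a) (hQ_sum : ∑ a, Q a = 1)
    (habs : ∀ a, Q a = 0 → P a = 0) :
    Real.exp (-(∑ a, P a * Real.log (P a / Q a))) ≤
      2 * (1 - (1 / 2) * ∑ a, |P a - Q a|) := by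
  set T := ∑ a, |P a - Q a|
  set K := ∑ a, P a * log (P a / Q a)
  have hjensen := exp_neg_half_sum_mul_log_div_le_sum_sqrt_mul univ (fun a _ => hP_nonneg a)
    hP_sum (fun a _ => hQ_nonneg a) fun a _ => habs a
  have hcs := sq_sum_sqrt_mul_le_sum_min_mul_sum_max univ (fun a _ => hP_nonneg a)
    fun a _ => hQ_nonneg a
  rw [sum_min_eq_half_sub_abs, sum_max_eq_half_add_abs, hP_sum, hQ_sum] at hcs
  have hexp_sq : exp (-K) = exp (-(1 / 2) * K) ^ 2 := by rw [← exp_nat_mul]; ring_nf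
  calc exp (-K) ≤ (∑ a, √(P a * Q a)) ^ 2 := by
        rw [hexp_sq]; exact pow_le_pow_left₀ (exp_pos _).le hjensen 2
    _ ≤ (1 - (1 / 2) * T) * (1 + (1 / 2) * T) := by linarith
    _ ≤ 2 * (1 - (1 / 2) * T) := by linarith [sq_nonneg (1 - (1 / 2) * T)]

theorem bretagnolle_huber
    {A : Type*} [Fintype A] [Nonempty A]
    (P Q : A → ℝ)
    (hP_nonneg : ∀ a, 0 ≤ P a) (hP_sum : ∑ a, P a = 1)
    (hQ_nonneg : ∀ a, 0 ≤ Q a) (hQ_sum : ∑ a, Q a = 1)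
    (habs : ∀ a, Q a = 0 → P a = 0) :
    Real.exp (-(∑ a, P a * Real.log (P a / Q a))) ≤
      2 * (1 - (1 / 2) * ∑ a, |P a - Q a|) :=
  bretagnolle_huber_general P Q hP_nonneg hP_sum hQ_nonneg hQ_sum habs
end
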